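/- arXiv:1004.2795 — 2 statements merged into one kernel-verified Lean document; each statement's English description precedes it below -/
import Mathlib

section
/- Let l ≥ 2 and n be positive integers and let C be a binary linear code of length l+n (a linear subspace of F_2^{l+n}). Let d^⊥ denote the minimum Hamming weight of a nonzero codeword of the dual code C^⊥. Suppose v_1,...,v_l ∈ C^⊥ are such that for each j the vector formed by the first l coordinates of v_j equals the j-th standard unit vector e_j of F_2^l, and let m = |(⋃_{j=1}^l supp(v_j)) \ {1,...,l}|. Then 2m ≥ 3(d^⊥ − l), i.e. m ≥ (3/2)(d^⊥ − l). -/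
/-- The dual code of a binary linear code `C ⊆ F_2^N` under the standard inner product. -/
def dualCode {N : ℕ} (C : Submodule (ZMod 2) (Fin N → ZMod 2)) :
    Submodule (ZMod 2) (Fin N → ZMod 2) where
  carrier := {v | ∀ c ∈ C, ∑ h, v h * c h = 0}
  add_mem' := by
    intro a b ha hb c hc
    simp only [Set.mem_setOf_eq] at *
    simp [Pi.add_apply, add_mul, Finset.sum_add_distrib, ha c hc, hb c hc]
  zero_mem' := by
    intro c hc
    simp
  smul_mem' := by
    intro r a ha c hc
    simp only [Set.mem_setOf_eq] at *
    simp [Pi.smul_apply, smul_eq_mul, mul_assoc, ← Finset.mul_sum, ha c hc]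

/-- The minimum Hamming weight of a nonzero codeword of `C`. -/
noncomputable def minWeight {N : ℕ} (C : Submodule (ZMod 2) (Fin N → ZMod 2)) : ℕ :=
  sInf {w | ∃ c ∈ C, c ≠ 0 ∧ w = hammingNorm c}

/-!
Only two of the vectors are needed. Let `a`, `b` be the parts of `v₁`, `v₂` beyond the first `l`
coordinates. The vectors `v₁`, `v₂`, `v₁ + v₂` are nonzero codewords of `C^⊥` with heads of weight
`1`, `1`, `2`, so `d^⊥ ≤ 1 + wt a`, `d^⊥ ≤ 1 + wt b` and `d^⊥ ≤ 2 + wt (a + b)`. Over `𝔽₂`,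
`wt a + wt b + wt (a + b) = 2 |supp a ∪ supp b| ≤ 2m`, so adding gives `3 d^⊥ ≤ 4 + 2m ≤ 3l + 2m`.
-/

open Finset

lemma minWeight_le_hammingNorm {N : ℕ} {D : Submodule (ZMod 2) (Fin N → ZMod 2)}
    {x : Fin N → ZMod 2} (hx : x ∈ D) (hx0 : x ≠ 0) : minWeight D ≤ hammingNorm x :=
  Nat.sInf_le ⟨x, hx, hx0, rfl⟩

lemma hammingNorm_eq_castAdd_add_natAdd {β : Type*} [Zero β] [DecidableEq β] {l n : ℕ}
    (x : Fin (l + n) → β) :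
    hammingNorm x = hammingNorm (fun i => x (Fin.castAdd n i))
      + hammingNorm (fun i => x (Fin.natAdd l i)) := by
  simp only [hammingNorm, card_filter, Fin.sum_univ_add]

lemma hammingNorm_single {ι β : Type*} [Fintype ι] [DecidableEq ι] [Zero β] [DecidableEq β]
    (i : ι) {a : β} (ha : a ≠ 0) : hammingNorm (Pi.single i a : ι → β) = 1 := by
  have hsupp : ({k | (Pi.single i a : ι → β) k ≠ 0} : Finset ι) = {i} := by
    ext k
    by_cases hki : k = i <;> simp_all [Pi.single_apply]
  rw [hammingNorm, hsupp, card_singleton]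

lemma hammingNorm_single_add_single {ι β : Type*} [Fintype ι] [DecidableEq ι] [AddMonoid β]
    [DecidableEq β] {i j : ι} (hij : i ≠ j) {a b : β} (ha : a ≠ 0) (hb : b ≠ 0) :
    hammingNorm (Pi.single i a + Pi.single j b : ι → β) = 2 := by
  have hsupp :
      ({k | (Pi.single i a + Pi.single j b : ι → β) k ≠ 0} : Finset ι) = {i, j} := by
    ext k
    by_cases hki : k = i <;> by_cases hkj : k = j <;> simp_all [Pi.single_apply]
  rw [hammingNorm, hsupp, card_pair hij]

/-- Over `𝔽₂`, a coordinate in the support of `x` or of `y` lies in exactly two of the supports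
of `x`, `y` and `x + y`. -/
lemma hammingNorm_add_hammingNorm_add_hammingNorm_add {ι : Type*} [Fintype ι] [DecidableEq ι]
    (x y : ι → ZMod 2) :
    hammingNorm x + hammingNorm y + hammingNorm (x + y) = 2 * #{i | x i ≠ 0 ∨ y i ≠ 0} := by
  have hcoord : ∀ a b : ZMod 2, ((if a ≠ 0 then 1 else 0) + (if b ≠ 0 then 1 else 0)
      + (if a + b ≠ 0 then 1 else 0) : ℕ) = 2 * if a ≠ 0 ∨ b ≠ 0 then 1 else 0 := by
    decide
  simp only [hammingNorm, card_filter, mul_sum, ← sum_add_distrib, Pi.add_apply, hcoord]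

theorem three_mul_minWeight_le {l n : ℕ} {D : Submodule (ZMod 2) (Fin (l + n) → ZMod 2)}
    {u w : Fin (l + n) → ZMod 2} (hu : u ∈ D) (hw : w ∈ D) {i j : Fin l} (hij : i ≠ j)
    (hu_head : (fun k => u (Fin.castAdd n k)) = Pi.single i 1)
    (hw_head : (fun k => w (Fin.castAdd n k)) = Pi.single j 1) :
    3 * minWeight D ≤ 4 + 2 * #{k | u (Fin.natAdd l k) ≠ 0 ∨ w (Fin.natAdd l k) ≠ 0} := by
  have huw_head : (fun k => (u + w) (Fin.castAdd n k)) = Pi.single i 1 + Pi.single j 1 := by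
    rw [← hu_head, ← hw_head]; rfl
  have hu_wt := hammingNorm_eq_castAdd_add_natAdd u
  have hw_wt := hammingNorm_eq_castAdd_add_natAdd w
  have huw_wt := hammingNorm_eq_castAdd_add_natAdd (u + w)
  rw [hu_head, hammingNorm_single i one_ne_zero] at hu_wt
  rw [hw_head, hammingNorm_single j one_ne_zero] at hw_wt
  rw [huw_head, hammingNorm_single_add_single hij one_ne_zero one_ne_zero] at huw_wt
  have hweight {x : Fin (l + n) → ZMod 2} (hx : x ∈ D) (hx0 : 0 < hammingNorm x) :
      minWeight D ≤ hammingNorm x :=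
    minWeight_le_hammingNorm hx (hammingNorm_pos_iff.mp hx0)
  have hdu := hweight hu (by omega)
  have hdw := hweight hw (by omega)
  have hduw := hweight (D.add_mem hu hw) (by omega)
  have hsupp := hammingNorm_add_hammingNorm_add_hammingNorm_add
    (fun k => u (Fin.natAdd l k)) (fun k => w (Fin.natAdd l k))
  rw [Pi.add_def] at hsupp
  simp only [Pi.add_apply] at huw_wt
  omega

theorem access_group_ge_three_halves_general
    (l n : ℕ) (hl : 2 ≤ l)
    (C : Submodule (ZMod 2) (Fin (l + n) → ZMod 2))
    (dperp : ℕ) (hd : dperp = minWeight (dualCode C))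
    (v : Fin l → Fin (l + n) → ZMod 2)
    (hv : ∀ j, v j ∈ dualCode C)
    (hunit : ∀ j j' : Fin l, v j (Fin.castAdd n j') = if j' = j then 1 else 0)
    (m : ℕ)
    (hm : m = ((⋃ j, {h | v j h ≠ 0}) \ {h : Fin (l + n) | (h : ℕ) < l}).ncard) :
    3 * dperp ≤ 2 * m + 3 * l := by
  let j₀ : Fin l := ⟨0, by omega⟩
  let j₁ : Fin l := ⟨1, by omega⟩
  have hhead (j : Fin l) : (fun k => v j (Fin.castAdd n k)) = Pi.single j 1 := by
    funext k
    rw [hunit, Pi.single_apply]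
  have htail : #{k | v j₀ (Fin.natAdd l k) ≠ 0 ∨ v j₁ (Fin.natAdd l k) ≠ 0} ≤ m := by
    rw [hm, ← Set.ncard_coe_finset,
      ← Set.ncard_image_of_injective (f := Fin.natAdd l) _ (Fin.natAdd_injective n l)]
    refine Set.ncard_le_ncard ?_
    rintro _ ⟨k, hk, rfl⟩
    simp only [coe_filter, mem_univ, true_and, Set.mem_ofPred_eq] at hk
    refine ⟨?_, by simp⟩
    rcases hk with hk | hk
    · exact Set.mem_iUnion.mpr ⟨j₀, hk⟩
    · exact Set.mem_iUnion.mpr ⟨j₁, hk⟩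
  have hd_le := three_mul_minWeight_le (hv j₀) (hv j₁) (by simp [j₀, j₁, Fin.ext_iff])
    (hhead j₀) (hhead j₁)
  omega

/-- **Corollary 4**: for a binary code `C` of length `l + n` with `l ≥ 2`, if
`v_1, …, v_l ∈ C^⊥` have the standard unit vectors of `F_2^l` as their first `l` coordinates
and `m` is the number of coordinates beyond the first `l` on which some `v_j` is nonzero,
then `m ≥ (3/2)(d^⊥ − l)` (stated in the equivalent integer form `3·d^⊥ ≤ 2·m + 3·l`),
where `d^⊥` is the minimum weight of `C^⊥`. -/
theorem access_group_ge_three_halves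
    (l n : ℕ) (hl : 2 ≤ l) (hn : 0 < n)
    (C : Submodule (ZMod 2) (Fin (l + n) → ZMod 2))
    (dperp : ℕ) (hd : dperp = minWeight (dualCode C))
    (v : Fin l → Fin (l + n) → ZMod 2)
    (hv : ∀ j, v j ∈ dualCode C)
    (hunit : ∀ j j' : Fin l, v j (Fin.castAdd n j') = if j' = j then 1 else 0)
    (m : ℕ)
    (hm : m = ((⋃ j, {h | v j h ≠ 0}) \ {h : Fin (l + n) | (h : ℕ) < l}).ncard) :
    3 * dperp ≤ 2 * m + 3 * l :=
  access_group_ge_three_halves_general l n hl C dperp hd v hv hunit m hm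
end

section
/- Let C be a self-dual binary linear code of length N ≥ 2, i.e. a linear subspace of F_2^N with C = C^⊥. Suppose v_1, v_2 ∈ C satisfy (v_1)_1 = 1, (v_1)_2 = 0, (v_2)_1 = 0, (v_2)_2 = 1. Then |(supp(v_1) ∪ supp(v_2)) \ {1,2}| is even. -/
/-!
Over `F_2` the weight of a word is congruent to the sum of its coordinates, and the indicator
of `supp u ∪ supp v` is `u + v + u v = u² + v² + u v` coordinatewise. In a self-dual code all
inner products `u·u`, `v·v`, `u·v` vanish, so `|supp u ∪ supp v| ≡ u·u + v·v + u·v = 0`.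
Removing the two coordinates `0 ∈ supp v₁` and `1 ∈ supp v₂` keeps the parity.
-/

theorem Set.even_ncard_diff_pair_iff {α : Type*} {s : Set α} {a b : α} (hs : s.Finite)
    (hab : a ≠ b) (ha : a ∈ s) (hb : b ∈ s) :
    Even (s \ {a, b}).ncard ↔ Even s.ncard := by
  have hsub : ({a, b} : Set α) ⊆ s := Set.insert_subset ha (Set.singleton_subset_iff.mpr hb)
  have htwo : 2 ≤ s.ncard := Set.ncard_pair hab ▸ Set.ncard_le_ncard hsub hs
  rw [Set.ncard_sdiff hsub, Set.ncard_pair hab, Nat.even_sub htwo]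
  simp

theorem ZMod.even_ncard_support_iff_sum_eq_zero {ι : Type*} [Fintype ι] (w : ι → ZMod 2) :
    Even {i | w i ≠ 0}.ncard ↔ ∑ i, w i = 0 := by
  classical
  have hw : ∀ i, w i = if w i ≠ 0 then 1 else 0 := by
    intro i
    generalize w i = x
    revert x
    decide
  rw [Finset.sum_congr rfl fun i _ ↦ hw i, Finset.sum_boole, ← Set.ncard_coe_finset,
    Finset.coe_filter_univ, ZMod.natCast_eq_zero_iff_even]

theorem sum_mul_eq_zero_of_eq_dualCode {N : ℕ} {C : Submodule (ZMod 2) (Fin N → ZMod 2)}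
    (hsd : C = dualCode C) {u v : Fin N → ZMod 2} (hu : u ∈ C) (hv : v ∈ C) :
    ∑ h, u h * v h = 0 :=
  (hsd ▸ hu : u ∈ dualCode C) v hv

theorem even_ncard_support_union_of_eq_dualCode {N : ℕ}
    {C : Submodule (ZMod 2) (Fin N → ZMod 2)} (hsd : C = dualCode C)
    {u v : Fin N → ZMod 2} (hu : u ∈ C) (hv : v ∈ C) :
    Even ({h | u h ≠ 0} ∪ {h | v h ≠ 0}).ncard := by
  have hor : ∀ x y : ZMod 2, (x ≠ 0 ∨ y ≠ 0) ↔ x * x + y * y + x * y ≠ 0 := by decide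
  have hunion : {h | u h ≠ 0} ∪ {h | v h ≠ 0} = {h | u h * u h + v h * v h + u h * v h ≠ 0} := by
    ext h
    exact hor (u h) (v h)
  rw [hunion, ZMod.even_ncard_support_iff_sum_eq_zero, Finset.sum_add_distrib,
    Finset.sum_add_distrib, sum_mul_eq_zero_of_eq_dualCode hsd hu hu,
    sum_mul_eq_zero_of_eq_dualCode hsd hv hv, sum_mul_eq_zero_of_eq_dualCode hsd hu hv]
  simp

/-- **Proposition 8**: let `C` be a self-dual binary code of length `N ≥ 2` and let
`v₁, v₂ ∈ C` satisfy `(v₁)₁ = 1, (v₁)₂ = 0, (v₂)₁ = 0, (v₂)₂ = 1` (coordinates indexed from 1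
in the paper, from 0 here).  Then the number of coordinates beyond the first two on which
`v₁` or `v₂` is nonzero is even. -/
theorem self_dual_minimal_access_group_even
    (N : ℕ) (hN : 2 ≤ N)
    (C : Submodule (ZMod 2) (Fin N → ZMod 2))
    (hsd : C = dualCode C)
    (v₁ v₂ : Fin N → ZMod 2) (hv₁ : v₁ ∈ C) (hv₂ : v₂ ∈ C)
    (h₁₀ : v₁ ⟨0, by omega⟩ = 1)
    (h₂₁ : v₂ ⟨1, by omega⟩ = 1) :
    Even ((({h | v₁ h ≠ 0} ∪ {h | v₂ h ≠ 0}) \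
      {(⟨0, by omega⟩ : Fin N), ⟨1, by omega⟩}).ncard) := by
  rw [Set.even_ncard_diff_pair_iff (Set.toFinite _) (by simp) (.inl (by simp [h₁₀]))
    (.inr (by simp [h₂₁]))]
  exact even_ncard_support_union_of_eq_dualCode hsd hv₁ hv₂
end
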